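/- arXiv:2106.08563 — 4 statements merged into one kernel-verified Lean document; each statement's English description precedes it below -/
import Mathlib

section
/- Let μ₀ be a probability measure on a measurable space (T, 𝒯), and μ₁ a finite measure absolutely continuous with respect to μ₀. Let 𝓕 be a sub-σ-algebra of 𝒯. If the strong completion of 𝓕 restricted to D within 𝒯 restricted to D under μ₀ differs from 𝒯 restricted to D for every D ∈ 𝒯 with μ₀(D) > 0 (nowhere equivalence under μ₀), and the density dμ₁/dμ₀ is strictly positive μ₀-a.e., then 𝒯 is nowhere equivalent to 𝓕 under μ₁. -/
open MeasureTheory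

/-- The restriction of a σ-algebra `m` to a set `D`: all sets of the form `D ∩ E`
with `E` `m`-measurable. -/
def restrictedSets {T : Type*} (m : MeasurableSpace T) (D : Set T) : Set (Set T) :=
  {S | ∃ E : Set T, MeasurableSet[m] E ∧ S = D ∩ E}

/-- The strong completion of `F` restricted to `D` within `m0` restricted to `D` under `P`:
sets of the form `E △ N` with `E ∈ F^D` and `N ∈ m0^D` `P`-null. -/
def strongCompletion {T : Type*} (F m0 : MeasurableSpace T) (P : @Measure T m0) (D : Set T) :
    Set (Set T) :=
  {S | ∃ E ∈ restrictedSets F D, ∃ N ∈ restrictedSets m0 D, P N = 0 ∧ S = symmDiff E N}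

/-- `m0` is nowhere equivalent to `F` under `P`: for every `m0`-measurable `D` of positive
measure, the strong completion of `F^D` within `m0^D` under `P` differs from `m0^D`. -/
def NowhereEquivalent {T : Type*} (m0 : MeasurableSpace T) (F : MeasurableSpace T)
    (P : @Measure T m0) : Prop :=
  ∀ D : Set T, MeasurableSet[m0] D → 0 < P D →
    strongCompletion F m0 P D ≠ restrictedSets m0 D

/-!
A positive density makes `μ₁` and `μ₀` mutually absolutely continuous, so they have the same null
sets. Null sets are the only way the measure enters the strong completion, hence the strong
completions under `μ₀` and `μ₁` agree on every `D`, and so do the sets `D` of positive measure.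
-/

namespace MeasureTheory.Measure

variable {α : Type*} {m : MeasurableSpace α} {μ ν : Measure α}

theorem AbsolutelyContinuous.symm_of_ae_rnDeriv_pos [HaveLebesgueDecomposition μ ν]
    (hμν : μ ≪ ν) (hpos : ∀ᵐ x ∂ν, 0 < μ.rnDeriv ν x) : ν ≪ μ :=
  withDensity_rnDeriv_eq μ ν hμν ▸ withDensity_absolutelyContinuous'
    (measurable_rnDeriv μ ν).aemeasurable (hpos.mono fun _ hx ↦ hx.ne')

end MeasureTheory.Measure

section StrongCompletion

variable {T : Type*} {F m0 : MeasurableSpace T} {P Q : Measure T}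

theorem strongCompletion_mono_of_absolutelyContinuous (hPQ : P ≪ Q) (D : Set T) :
    strongCompletion F m0 Q D ⊆ strongCompletion F m0 P D := by
  rintro S ⟨E, hE, N, hN, hQN, rfl⟩
  exact ⟨E, hE, N, hN, hPQ hQN, rfl⟩

theorem NowhereEquivalent.of_absolutelyContinuous (hQ : NowhereEquivalent m0 F Q) (hPQ : P ≪ Q)
    (hQP : Q ≪ P) : NowhereEquivalent m0 F P := by
  intro D hD hPD
  have hQD : 0 < Q D := pos_iff_ne_zero.2 fun hQD ↦ hPD.ne' (hPQ hQD)
  have hcompl : strongCompletion F m0 P D = strongCompletion F m0 Q D :=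
    (strongCompletion_mono_of_absolutelyContinuous hQP D).antisymm
      (strongCompletion_mono_of_absolutelyContinuous hPQ D)
  exact hcompl ▸ hQ D hD hQD

end StrongCompletion

theorem nowhereEquivalent_of_absolutelyContinuous_pos_density_general
    {T : Type*} {m0 : MeasurableSpace T}
    (μ₀ : Measure T) [IsProbabilityMeasure μ₀]
    (μ₁ : Measure T) [IsFiniteMeasure μ₁] (hac : μ₁ ≪ μ₀)
    (F : MeasurableSpace T)
    (hne : NowhereEquivalent m0 F μ₀)
    (hpos : ∀ᵐ t ∂μ₀, 0 < μ₁.rnDeriv μ₀ t) :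
    NowhereEquivalent m0 F μ₁ :=
  hne.of_absolutelyContinuous hac (hac.symm_of_ae_rnDeriv_pos hpos)

/-- If `𝒯` is nowhere equivalent to `F` under `μ₀`, and `μ₁ ≪ μ₀` with a.e. strictly
positive density, then `𝒯` is nowhere equivalent to `F` under `μ₁`. -/
theorem nowhereEquivalent_of_absolutelyContinuous_pos_density
    {T : Type*} {m0 : MeasurableSpace T}
    (μ₀ : Measure T) [IsProbabilityMeasure μ₀]
    (μ₁ : Measure T) [IsFiniteMeasure μ₁] (hac : μ₁ ≪ μ₀)
    (F : MeasurableSpace T) (hF : F ≤ m0)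
    (hne : NowhereEquivalent m0 F μ₀)
    (hpos : ∀ᵐ t ∂μ₀, 0 < μ₁.rnDeriv μ₀ t) :
    NowhereEquivalent m0 F μ₁ :=
  nowhereEquivalent_of_absolutelyContinuous_pos_density_general μ₀ μ₁ hac F hne hpos
end

section
/- Let (T, 𝒯, μ) be an atomless probability space and 𝓕 ⊆ 𝒯 a sub-σ-algebra. Suppose that for every m ≥ 2 there exists a 𝒯-measurable partition {E₁, …, E_m} of T such that μ(E_k) = 1/m and each E_k is independent of 𝓕 under μ (i.e., μ(E_k ∩ F) = μ(E_k)·μ(F) for all F ∈ 𝓕). Then 𝒯 is nowhere equivalent to 𝓕 under μ. -/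
/-!
Suppose that on some `D` of positive measure every `𝒯`-set agrees a.e. with an `𝓕`-set, and
take the supplement `E₁, …, E_m`. Then each `E_k` agrees on `D` with some `G_k ∈ 𝓕`; these
`G_k` are a.e. disjoint on `D`, so after removing overlaps they may be taken disjoint. By
independence `μ (D ∩ E_k) ≤ μ (E_k ∩ G_k) = μ (G_k) / m`, and summing over `k` gives
`μ D ≤ 1 / m` for every `m`, a contradiction.
-/

open MeasureTheory

open Set Function
open scoped ENNReal symmDiff

theorem exists_measurableSet_pairwise_disjoint_ae_eq {α ι : Type*} [Countable ι]
    {m : MeasurableSpace α} {μ : Measure α} (F : MeasurableSpace α) {G : ι → Set α}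
    (hG : ∀ i, MeasurableSet[F] (G i)) (hd : Pairwise (AEDisjoint μ on G)) :
    ∃ H : ι → Set α, (∀ i, MeasurableSet[F] (H i)) ∧ Pairwise (Disjoint on H) ∧
      ∀ i, H i =ᵐ[μ] G i := by
  refine ⟨fun i => G i \ ⋃ (j) (_ : j ≠ i), G j, fun i => ?_, fun i j hij => ?_, fun i => ?_⟩
  · exact (hG i).diff (.iUnion fun j => .iUnion fun _ => hG j)
  · refine disjoint_left.mpr fun x ⟨hxi, _⟩ ⟨_, hxj⟩ => hxj ?_
    exact mem_iUnion₂.mpr ⟨i, hij, hxi⟩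
  · refine AEDisjoint.sdiff_ae_eq_left ?_
    exact AEDisjoint.iUnion_right_iff.mpr fun j => AEDisjoint.iUnion_right_iff.mpr
      fun hji => hd hji.symm

theorem measure_univ_le_of_ae_eq_of_indep {T ι : Type*} [Countable ι] {m0 : MeasurableSpace T}
    {μ ν : Measure T} (hνμ : ν ≤ μ) {F : MeasurableSpace T} (hF : F ≤ m0) {E : ι → Set T}
    {c : ℝ≥0∞} (hdisj : Pairwise (Disjoint on E)) (hcover : ⋃ k, E k = univ)
    (hind : ∀ k A, MeasurableSet[F] A → μ (E k ∩ A) = c * μ A)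
    (hEF : ∀ k, ∃ G, MeasurableSet[F] G ∧ E k =ᵐ[ν] G) :
    ν univ ≤ c * μ univ := by
  choose G hGF hEG using hEF
  obtain ⟨H, hHF, hHdisj, hHG⟩ := exists_measurableSet_pairwise_disjoint_ae_eq F hGF
    fun k l hkl => (hdisj hkl).aedisjoint.congr (hEG k).symm (hEG l).symm
  have hEH : ∀ k, E k =ᵐ[ν] (E k ∩ H k : Set T) := fun k => by
    simpa only [inter_self] using
      ae_eq_set_inter (Filter.EventuallyEq.refl _ (E k)) ((hEG k).trans (hHG k).symm)
  calc ν univ = ν (⋃ k, E k) := by rw [hcover]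
    _ ≤ ∑' k, ν (E k) := measure_iUnion_le E
    _ = ∑' k, ν (E k ∩ H k) := tsum_congr fun k => measure_congr (hEH k)
    _ ≤ ∑' k, μ (E k ∩ H k) := ENNReal.tsum_le_tsum fun k => hνμ _
    _ = c * μ (⋃ k, H k) := by
      simp only [hind _ _ (hHF _), ENNReal.tsum_mul_left,
        measure_iUnion hHdisj fun k => hF _ (hHF k)]
    _ ≤ c * μ univ := by gcongr; exact subset_univ _

theorem exists_ae_eq_restrict_of_strongCompletion_eq {T : Type*} {m0 : MeasurableSpace T}
    {μ : Measure T} {F : MeasurableSpace T} {D E : Set T} (hD : MeasurableSet[m0] D)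
    (hDF : strongCompletion F m0 μ D = restrictedSets m0 D) (hE : MeasurableSet[m0] E) :
    ∃ G, MeasurableSet[F] G ∧ E =ᵐ[μ.restrict D] G := by
  have hDE : D ∩ E ∈ strongCompletion F m0 μ D := hDF ▸ ⟨E, hE, rfl⟩
  obtain ⟨-, ⟨G, hG, rfl⟩, N, -, hN, hDEG⟩ := hDE
  refine ⟨G, hG, measure_symmDiff_eq_zero_iff.mp ?_⟩
  rwa [Measure.restrict_apply' hD, inter_comm, inter_symmDiff_distrib_left, hDEG,
    symmDiff_comm, symmDiff_symmDiff_cancel_left]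

theorem nowhereEquivalent_of_asymptotic_independent_supplement_general
    {T : Type*} {m0 : MeasurableSpace T}
    (μ : Measure T) [IsProbabilityMeasure μ]
    (F : MeasurableSpace T) (hF : F ≤ m0)
    (hsupp : ∀ m : ℕ, 2 ≤ m → ∃ E : Fin m → Set T,
      (∀ k, MeasurableSet[m0] (E k)) ∧
      Pairwise (fun k l => Disjoint (E k) (E l)) ∧
      (⋃ k, E k) = Set.univ ∧
      (∀ k, μ (E k) = (m : ENNReal)⁻¹) ∧
      (∀ k, ∀ G : Set T, MeasurableSet[F] G → μ (E k ∩ G) = μ (E k) * μ G)) :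
    NowhereEquivalent m0 F μ := by
  intro D hD hDpos hDF
  obtain ⟨n, hn⟩ := ENNReal.exists_inv_nat_lt hDpos.ne'
  obtain ⟨E, hEm, hEdisj, hEcover, hEμ, hEind⟩ := hsupp (n + 2) (by omega)
  have hDle := measure_univ_le_of_ae_eq_of_indep Measure.restrict_le_self hF hEdisj hEcover
    (fun k A hA => by rw [hEind k A hA, hEμ k])
    fun k => exists_ae_eq_restrict_of_strongCompletion_eq hD hDF (hEm k)
  rw [Measure.restrict_apply_univ, measure_univ, mul_one] at hDle
  have hinv : ((n + 2 : ℕ) : ℝ≥0∞)⁻¹ ≤ (n : ℝ≥0∞)⁻¹ := by gcongr; omega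
  exact (hDle.trans hinv).not_gt hn

/-- If for every `m ≥ 2` there is a measurable partition of `T` into `m` sets of measure
`1/m`, each independent of the sub-σ-algebra `F`, then `𝒯` is nowhere equivalent to `F`. -/
theorem nowhereEquivalent_of_asymptotic_independent_supplement
    {T : Type*} {m0 : MeasurableSpace T}
    (μ : Measure T) [IsProbabilityMeasure μ] (hatomless : NoAtoms μ)
    (F : MeasurableSpace T) (hF : F ≤ m0)
    (hsupp : ∀ m : ℕ, 2 ≤ m → ∃ E : Fin m → Set T,
      (∀ k, MeasurableSet[m0] (E k)) ∧
      Pairwise (fun k l => Disjoint (E k) (E l)) ∧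
      (⋃ k, E k) = Set.univ ∧
      (∀ k, μ (E k) = (m : ENNReal)⁻¹) ∧
      (∀ k, ∀ G : Set T, MeasurableSet[F] G → μ (E k ∩ G) = μ (E k) * μ G)) :
    NowhereEquivalent m0 F μ :=
  nowhereEquivalent_of_asymptotic_independent_supplement_general μ F hF hsupp
end

section
/- With the same construction as above, for every s₂ ∈ ∪_k B(a_k, r) and every s₁ ∈ B(a₁, r) \ {a₁}, we have u₁(a₁, s₂) > u₁(s₁, s₂); i.e., within the ball B(a₁, r), the center a₁ strictly dominates every other action for player 1. -/
/-!
On the ball `closedBall (a 0) r` every bump `β k` with `k ≠ 0` vanishes, by disjointness of the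
balls, so player 1's payoff there collapses to `β 0 s₁ * (G - d * M) + γ s₁ - 2`, where
`d = dist s₁ (a 0)`, `G ≥ 0` is the payoff of the centre row against `s₂` and `M` is the total
opponent weight that row sees. At the centre `β 0 = 1`, `d = 0` and `γ = 0`, so the payoff is
`G - 2`. Away from the centre the loss is at least `β 0 s₁ * d * M`, which is positive because
`s₂` lies in some ball `B(a_j, r)` where `β j s₂ > 0`.
-/

open Metric Finset

section RowPayoff

variable {m : ℕ} [NeZero m]

def otherRows (k : Fin m) : Finset (Fin m) := univ.filter (fun l => l ≠ k ∧ l ≠ k + 1)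

/-- The payoff of row `k`, at distance `t` from its centre, against opponent weights `w`. -/
def rowGain (w : Fin m → ℝ) (k : Fin m) (t : ℝ) : ℝ :=
  w k * (3 - t) + w (k + 1) * (1 - t) + ∑ l ∈ otherRows k, w l * (2 - t)

def rowMass (w : Fin m → ℝ) (k : Fin m) : ℝ :=
  w k + w (k + 1) + ∑ l ∈ otherRows k, w l

theorem rowGain_eq_sub_mul_rowMass (w : Fin m → ℝ) (k : Fin m) (t : ℝ) :
    rowGain w k t = rowGain w k 0 - t * rowMass w k := by
  have hrest : ∑ l ∈ otherRows k, w l * (2 - t)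
      = ∑ l ∈ otherRows k, w l * (2 - 0) - t * ∑ l ∈ otherRows k, w l := by
    rw [mul_sum, ← sum_sub_distrib]
    exact sum_congr rfl fun l _ => by ring
  unfold rowGain rowMass
  linear_combination hrest

theorem rowGain_zero_nonneg {w : Fin m → ℝ} (hw : ∀ l, 0 ≤ w l) (k : Fin m) :
    0 ≤ rowGain w k 0 := by
  have hrest := sum_nonneg fun l (_ : l ∈ otherRows k) =>
    mul_nonneg (hw l) (by norm_num : (0 : ℝ) ≤ 2 - 0)
  unfold rowGain
  linarith [hw k, hw (k + 1)]

theorem le_rowMass {w : Fin m → ℝ} (hw : ∀ l, 0 ≤ w l) (j k : Fin m) :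
    w j ≤ rowMass w k := by
  have hrest := sum_nonneg fun l (_ : l ∈ otherRows k) => hw l
  unfold rowMass
  by_cases hjk : j = k
  · subst hjk; linarith [hw (j + 1)]
  by_cases hjk' : j = k + 1
  · subst hjk'; linarith [hw k]
  · have hj : j ∈ otherRows k := mem_filter.2 ⟨mem_univ j, hjk, hjk'⟩
    linarith [hw k, hw (k + 1), single_le_sum (fun l _ => hw l) hj]

theorem sum_payoff_eq_sum_rowGain (v w t : Fin m → ℝ) :
    (∑ k, v k * w k * (3 - t k)) + (∑ k, v k * w (k + 1) * (1 - t k))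
      + (∑ k, ∑ l ∈ univ.filter (fun l => l ≠ k ∧ l ≠ k + 1), v k * w l * (2 - t k))
      = ∑ k, v k * rowGain w k (t k) := by
  simp only [rowGain, otherRows, ← sum_add_distrib, mul_add, mul_sum, mul_assoc]

end RowPayoff

section Bumps

variable {X ι : Type*} [MetricSpace X] {a : ι → X} {r : ℝ} {β : ι → X → ℝ}

theorem bump_eq_zero_of_mem_closedBall_of_ne
    (hdisj : Pairwise (fun k l => Disjoint (closedBall (a k) r) (closedBall (a l) r)))
    (hβzero : ∀ k, ∀ x ∉ ball (a k) r, β k x = 0)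
    {k l : ι} (hkl : k ≠ l) {x : X} (hx : x ∈ closedBall (a l) r) : β k x = 0 :=
  hβzero k x fun hk => Set.disjoint_left.1 (hdisj hkl) (ball_subset_closedBall hk) hx

theorem bump_pos_of_mem_ball
    (hβone : ∀ k, ∀ x ∈ closedBall (a k) (r / 2), β k x = 1)
    (hβmid : ∀ k, ∀ x ∈ ball (a k) r \ closedBall (a k) (r / 2), β k x ∈ Set.Ioo (0 : ℝ) 1)
    {k : ι} {x : X} (hx : x ∈ ball (a k) r) : 0 < β k x := by
  by_cases hx' : x ∈ closedBall (a k) (r / 2)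
  · rw [hβone k x hx']; exact one_pos
  · exact (hβmid k x ⟨hx, hx'⟩).1

end Bumps

theorem center_strictly_dominates_in_ball_general
    {X : Type*} [MetricSpace X]
    {m : ℕ} [NeZero m] (a : Fin m → X)
    (r : ℝ) (hr : r ∈ Set.Ioo (0 : ℝ) 1)
    (hdisj : Pairwise (fun k l => Disjoint (closedBall (a k) r) (closedBall (a l) r)))
    (β : Fin m → X → ℝ) (γ : X → ℝ)
    (hβrange : ∀ k x, β k x ∈ Set.Icc (0 : ℝ) 1)
    (hγrange : ∀ x, γ x ∈ Set.Icc (-5 : ℝ) 0)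
    (hβone : ∀ k, ∀ x ∈ closedBall (a k) (r / 2), β k x = 1)
    (hβzero : ∀ k, ∀ x ∉ ball (a k) r, β k x = 0)
    (hβmid : ∀ k, ∀ x ∈ ball (a k) r \ closedBall (a k) (r / 2), β k x ∈ Set.Ioo (0 : ℝ) 1)
    (hγzero : ∀ x ∈ ⋃ k, closedBall (a k) (r / 2), γ x = 0)
    (u₁ : X → X → ℝ)
    (hu₁ : ∀ s₁ s₂, u₁ s₁ s₂ =
      (∑ k, β k s₁ * β k s₂ * (3 - dist s₁ (a k)))
      + (∑ k, β k s₁ * β (k + 1) s₂ * (1 - dist s₁ (a k)))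
      + (∑ k, ∑ l ∈ univ.filter (fun l => l ≠ k ∧ l ≠ k + 1),
          β k s₁ * β l s₂ * (2 - dist s₁ (a k)))
      + γ s₁ - 2) :
    ∀ s₂ ∈ ⋃ k, ball (a k) r, ∀ s₁ ∈ ball (a 0) r \ {a 0},
      u₁ (a 0) s₂ > u₁ s₁ s₂ := by
  rintro s₂ hs₂ s₁ ⟨hs₁, hs₁ne⟩
  set w : Fin m → ℝ := fun l => β l s₂
  have hw : ∀ l, 0 ≤ w l := fun l => (hβrange l s₂).1
  have hu₁_ball : ∀ x ∈ closedBall (a 0) r,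
      u₁ x s₂ = β 0 x * rowGain w 0 (dist x (a 0)) + γ x - 2 := fun x hx => by
    rw [hu₁, sum_payoff_eq_sum_rowGain (β · x) w (dist x <| a ·), sum_eq_single_of_mem 0
      (mem_univ 0) fun k _ hk => by
        rw [bump_eq_zero_of_mem_closedBall_of_ne hdisj hβzero hk hx, zero_mul]]
  have hcentre : a 0 ∈ closedBall (a 0) (r / 2) := mem_closedBall_self (by linarith [hr.1])
  have hu₁_centre : u₁ (a 0) s₂ = rowGain w 0 0 - 2 := by
    rw [hu₁_ball _ (closedBall_subset_closedBall (by linarith [hr.1]) hcentre),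
      hβone 0 _ hcentre, hγzero _ (Set.mem_iUnion.2 ⟨0, hcentre⟩), dist_self]
    ring
  obtain ⟨j, hj⟩ := Set.mem_iUnion.1 hs₂
  have hmass : 0 < rowMass w 0 :=
    (bump_pos_of_mem_ball hβone hβmid hj).trans_le (le_rowMass hw j 0)
  have hd : 0 < dist s₁ (a 0) := dist_pos.2 hs₁ne
  have hb : 0 < β 0 s₁ := bump_pos_of_mem_ball hβone hβmid hs₁
  have hloss : 0 < β 0 s₁ * dist s₁ (a 0) * rowMass w 0 := by positivity
  have hscale : β 0 s₁ * rowGain w 0 0 ≤ rowGain w 0 0 :=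
    mul_le_of_le_one_left (rowGain_zero_nonneg hw 0) (hβrange 0 s₁).2
  rw [hu₁_centre, hu₁_ball s₁ (ball_subset_closedBall hs₁),
    rowGain_eq_sub_mul_rowMass w 0 (dist s₁ (a 0))]
  linarith [(hγrange s₁).2]

/-- In the auxiliary game, within the ball B(a₁, r) the center a₁ strictly dominates
every other action for player 1, against any opponent action in ∪_k B(a_k, r). -/
theorem center_strictly_dominates_in_ball
    {X : Type*} [MetricSpace X] [CompactSpace X]
    {m : ℕ} [NeZero m] (hm : 2 ≤ m) (a : Fin m → X) (ha : Function.Injective a)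
    (r : ℝ) (hr : r ∈ Set.Ioo (0 : ℝ) 1)
    (hdisj : Pairwise (fun k l => Disjoint (closedBall (a k) r) (closedBall (a l) r)))
    (β : Fin m → X → ℝ) (γ : X → ℝ)
    (hβcont : ∀ k, Continuous (β k)) (hγcont : Continuous γ)
    (hβrange : ∀ k x, β k x ∈ Set.Icc (0 : ℝ) 1)
    (hγrange : ∀ x, γ x ∈ Set.Icc (-5 : ℝ) 0)
    (hβone : ∀ k, ∀ x ∈ closedBall (a k) (r / 2), β k x = 1)
    (hβzero : ∀ k, ∀ x ∉ ball (a k) r, β k x = 0)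
    (hβmid : ∀ k, ∀ x ∈ ball (a k) r \ closedBall (a k) (r / 2), β k x ∈ Set.Ioo (0 : ℝ) 1)
    (hγzero : ∀ x ∈ ⋃ k, closedBall (a k) (r / 2), γ x = 0)
    (hγneg : ∀ x ∉ ⋃ k, ball (a k) r, γ x = -5)
    (u₁ : X → X → ℝ)
    (hu₁ : ∀ s₁ s₂, u₁ s₁ s₂ =
      (∑ k, β k s₁ * β k s₂ * (3 - dist s₁ (a k)))
      + (∑ k, β k s₁ * β (k + 1) s₂ * (1 - dist s₁ (a k)))
      + (∑ k, ∑ l ∈ univ.filter (fun l => l ≠ k ∧ l ≠ k + 1),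
          β k s₁ * β l s₂ * (2 - dist s₁ (a k)))
      + γ s₁ - 2) :
    ∀ s₂ ∈ ⋃ k, ball (a k) r, ∀ s₁ ∈ ball (a 0) r \ {a 0},
      u₁ (a 0) s₂ > u₁ s₁ s₂ :=
  center_strictly_dominates_in_ball_general a r hr hdisj β γ hβrange hγrange hβone hβzero hβmid
    hγzero u₁ hu₁
end

section
/- Let (T, 𝒯, λ) be a probability space, φ : T → [0,1] measure-preserving to Lebesgue measure η, m ≥ 2, and f : T → [0, m] measurable with λ∘f⁻¹ equal to the uniform distribution on [0,m] and f(t) ∈ {φ(t), φ(t)+1, …, φ(t)+m−1} for λ-a.e. t. Define C_j = {t : f(t) = φ(t) + j} (up to a null set, {C₀,…,C_{m−1}} partitions T). Then for every Borel set E' ⊆ [0,1] and each j, λ(C_j ∩ φ⁻¹(E')) = (1/m)·η(E'). In particular λ(C_j) = 1/m and each C_j is independent of the σ-algebra φ⁻¹(𝓑([0,1])). -/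
/-!
Since `φ` is a.e. in the open interval `(0, 1)` and `f - φ` is a.e. a natural number, the fibre
`{f = φ + j}` meets `φ⁻¹ E'` (for `E' ⊆ [0, 1]`) exactly, up to a null set, in `f⁻¹ (E' + j)`. Its
measure is therefore the uniform mass `η(E') / m` of the translate `E' + j ⊆ [0, m]`; cutting a
general Borel set down to `[0, 1]` gives the rest.
-/

open MeasureTheory Set

theorem ae_mem_Ioo_of_map_eq_restrict_Icc {T : Type*} [MeasurableSpace T] {μ : Measure T}
    {φ : T → ℝ} (hφ : AEMeasurable φ μ) {a b : ℝ}
    (h : μ.map φ = volume.restrict (Icc a b)) : ∀ᵐ t ∂μ, φ t ∈ Ioo a b := by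
  refine ae_of_ae_map hφ ?_
  rw [h, ← Measure.restrict_congr_set Ioo_ae_eq_Icc]
  exact ae_restrict_mem measurableSet_Ioo

theorem natCast_eq_of_add_sub_mem_Icc {x : ℝ} {j k : ℕ} (hx : x ∈ Ioo 0 1)
    (h : x + k - j ∈ Icc 0 1) : k = j := by
  have hkj : (k : ℤ) < j + 1 := by exact_mod_cast (by linarith [hx.1, h.2] : (k : ℝ) < j + 1)
  have hjk : (j : ℤ) < k + 1 := by exact_mod_cast (by linarith [hx.2, h.1] : (j : ℝ) < k + 1)
  omega

theorem setOf_eq_add_inter_preimage_ae_eq {T : Type*} [MeasurableSpace T] {μ : Measure T}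
    {φ f : T → ℝ} (hφ : ∀ᵐ t ∂μ, φ t ∈ Ioo 0 1) (hf : ∀ᵐ t ∂μ, ∃ k : ℕ, f t = φ t + k)
    {E : Set ℝ} (hE : E ⊆ Icc 0 1) (j : ℕ) :
    ({t | f t = φ t + j} ∩ φ ⁻¹' E : Set T) =ᵐ[μ] f ⁻¹' ((· - (j : ℝ)) ⁻¹' E) := by
  rw [Filter.eventuallyEq_set]
  filter_upwards [hφ, hf] with t hφt ⟨k, hk⟩
  simp only [mem_inter_iff, mem_ofPred_eq, mem_preimage, hk]
  constructor
  · rintro ⟨hkj, hφE⟩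
    rwa [hkj, add_sub_cancel_right]
  · intro hkE
    obtain rfl := natCast_eq_of_add_sub_mem_Icc hφt (hE hkE)
    rw [add_sub_cancel_right] at hkE
    exact ⟨rfl, hkE⟩

theorem uniform_Icc_preimage_sub_natCast {m j : ℕ} (hj : j < m) {E : Set ℝ}
    (hE : MeasurableSet E) (hEsub : E ⊆ Icc 0 1) :
    ((m : ENNReal)⁻¹ • volume.restrict (Icc (0 : ℝ) m)) ((· - (j : ℝ)) ⁻¹' E)
      = (m : ENNReal)⁻¹ * volume E := by
  have hshift : (· - (j : ℝ)) ⁻¹' E ⊆ Icc 0 m := by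
    intro x hx
    have hjm : (j : ℝ) + 1 ≤ m := by exact_mod_cast hj
    have hx01 := hEsub hx
    simp only [mem_Icc] at hx01 ⊢
    constructor <;> linarith [(Nat.cast_nonneg j : (0 : ℝ) ≤ j)]
  rw [Measure.smul_apply, smul_eq_mul, Measure.restrict_apply (measurable_sub_const _ hE),
    inter_eq_left.mpr hshift]
  simp only [sub_eq_add_neg, measure_preimage_add_right]

theorem purification_partition_independent_general
    {T : Type*} [MeasurableSpace T] (lam : Measure T)
    (m : ℕ)
    (φ : T → ℝ) (hφ : Measurable φ)
    (hφ_mp : lam.map φ = volume.restrict (Set.Icc (0 : ℝ) 1))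
    (f : T → ℝ) (hf : Measurable f)
    (hf_unif : lam.map f = (m : ENNReal)⁻¹ • volume.restrict (Set.Icc (0 : ℝ) m))
    (hf_supp : ∀ᵐ t ∂lam, ∃ j : ℕ, j < m ∧ f t = φ t + j)
    (C : ℕ → Set T) (hC : ∀ j, C j = {t | f t = φ t + j}) :
    (∀ j < m, ∀ E' : Set ℝ, MeasurableSet E' → E' ⊆ Set.Icc (0 : ℝ) 1 →
      lam (C j ∩ φ ⁻¹' E') = (m : ENNReal)⁻¹ * volume.restrict (Set.Icc (0 : ℝ) 1) E') ∧
    (∀ j < m, lam (C j) = (m : ENNReal)⁻¹) ∧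
    (∀ j < m, ∀ E' : Set ℝ, MeasurableSet E' →
      lam (C j ∩ φ ⁻¹' E') = lam (C j) * lam (φ ⁻¹' E')) := by
  have hφ_Ioo := ae_mem_Ioo_of_map_eq_restrict_Icc hφ.aemeasurable hφ_mp
  have hφ_Icc : lam (φ ⁻¹' Icc 0 1)ᶜ = 0 :=
    ae_iff.mp (hφ_Ioo.mono fun _ ht => Ioo_subset_Icc_self ht)
  have hC_inter : ∀ j < m, ∀ E : Set ℝ, MeasurableSet E →
      lam (C j ∩ φ ⁻¹' E) = (m : ENNReal)⁻¹ * volume.restrict (Icc 0 1) E := by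
    intro j hj E hE
    have hE₀ : MeasurableSet (E ∩ Icc 0 1) := hE.inter measurableSet_Icc
    rw [← measure_inter_conull hφ_Icc, inter_assoc, ← preimage_inter, hC,
      measure_congr (setOf_eq_add_inter_preimage_ae_eq hφ_Ioo
        (hf_supp.mono fun _ ⟨k, _, hk⟩ => ⟨k, hk⟩) inter_subset_right j),
      ← Measure.map_apply hf (measurable_sub_const _ hE₀), hf_unif,
      uniform_Icc_preimage_sub_natCast hj hE₀ inter_subset_right, Measure.restrict_apply hE]
  have hC_measure : ∀ j < m, lam (C j) = (m : ENNReal)⁻¹ := fun j hj => by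
    simpa using hC_inter j hj univ MeasurableSet.univ
  refine ⟨fun j hj E hE _ => hC_inter j hj E hE, hC_measure, fun j hj E hE => ?_⟩
  rw [hC_inter j hj E hE, hC_measure j hj, ← Measure.map_apply hφ hE, hφ_mp]

/-- If φ : T → [0,1] is measure-preserving to Lebesgue measure η, f is distributed
uniformly on [0,m], and a.e. f(t) = φ(t) + j for some j < m, then with
C_j = {t : f(t) = φ(t) + j}: for every Borel E' ⊆ [0,1],
λ(C_j ∩ φ⁻¹(E')) = η(E')/m; in particular λ(C_j) = 1/m and each C_j is
independent of the σ-algebra generated by φ. -/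
theorem purification_partition_independent
    {T : Type*} [MeasurableSpace T] (lam : Measure T) [IsProbabilityMeasure lam]
    (m : ℕ) (hm : 2 ≤ m)
    (φ : T → ℝ) (hφ : Measurable φ)
    (hφ_mp : lam.map φ = volume.restrict (Set.Icc (0 : ℝ) 1))
    (f : T → ℝ) (hf : Measurable f)
    (hf_unif : lam.map f = (m : ENNReal)⁻¹ • volume.restrict (Set.Icc (0 : ℝ) m))
    (hf_supp : ∀ᵐ t ∂lam, ∃ j : ℕ, j < m ∧ f t = φ t + j)
    (C : ℕ → Set T) (hC : ∀ j, C j = {t | f t = φ t + j}) :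
    (∀ j < m, ∀ E' : Set ℝ, MeasurableSet E' → E' ⊆ Set.Icc (0 : ℝ) 1 →
      lam (C j ∩ φ ⁻¹' E') = (m : ENNReal)⁻¹ * volume.restrict (Set.Icc (0 : ℝ) 1) E') ∧
    (∀ j < m, lam (C j) = (m : ENNReal)⁻¹) ∧
    (∀ j < m, ∀ E' : Set ℝ, MeasurableSet E' →
      lam (C j ∩ φ ⁻¹' E') = lam (C j) * lam (φ ⁻¹' E')) :=
  purification_partition_independent_general lam m φ hφ hφ_mp f hf hf_unif hf_supp C hC
end
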